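/- Let x = a + b·i ∈ ℂ with a and b both irrational, and suppose a and b are rationally independent, i.e., there exist no rational numbers r, s with a = r + s·b. Then OC(x+Γ) = {id}. -/

import Mathlib

open Pointwise Complex ComplexConjugate

/-- The square lattice `Γ = ℤ[i]`, i.e. the Gaussian integers viewed as an additive
subgroup of `ℂ`. -/
noncomputable def Zi : AddSubgroup ℂ :=
  AddMonoidHom.range (GaussianInt.toComplex.toAddMonoidHom)

/-- `f` is (the underlying map of) a surjective real-linear isometry of `ℂ`. -/
def IsLinIso (f : ℂ → ℂ) : Prop := ∃ R : ℂ ≃ₗᵢ[ℝ] ℂ, ⇑R = f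

/-- `f` is a rotation of `ℂ`, i.e. multiplication by a complex number of modulus 1. -/
def IsRotation (f : ℂ → ℂ) : Prop := ∃ u : ℂ, ‖u‖ = 1 ∧ ∀ w, f w = u * w

/-- `f` is a reflection of `ℂ`, i.e. `w ↦ u * conj w` for a complex number `u` of
modulus 1. -/
def IsReflection (f : ℂ → ℂ) : Prop := ∃ u : ℂ, ‖u‖ = 1 ∧ ∀ w, f w = u * conj w

/-- The shifted square lattice `x + Γ` as a subset of `ℂ`. -/
noncomputable def shiftedZi (x : ℂ) : Set ℂ := x +ᵥ (Zi : Set ℂ)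

/-- `OC (x+Γ)`: the set of (maps of) surjective real-linear isometries `f` of `ℂ` such
that `(x+Γ) ∩ f(x+Γ)` is a coset `c + Λ`, with `c ∈ x+Γ` and `Λ` a finite-index
additive subgroup of `Γ = ℤ[i]`. -/
noncomputable def OCs (x : ℂ) : Set (ℂ → ℂ) :=
  {f | IsLinIso f ∧ ∃ c ∈ shiftedZi x, ∃ Λ : AddSubgroup ℂ, Λ ≤ Zi ∧
    Λ.relIndex Zi ≠ 0 ∧ shiftedZi x ∩ (f '' shiftedZi x) = c +ᵥ (Λ : Set ℂ)}

/-- `SOC (x+Γ)`: the rotations among the coincidence isometries of `x + Γ`. -/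
noncomputable def SOCs (x : ℂ) : Set (ℂ → ℂ) := {f ∈ OCs x | IsRotation f}

/-!
Write `f w = u * σ w` with `‖u‖ = 1` and `σ ∈ {id, conj}`. A finite-index `Λ ≤ Γ` contains some
`n ≥ 1`, so `c` and `c + n` both lie in `f (x + Γ)`: `f` maps some `δ ∈ Γ` to `n`, which makes
`U = n * u` a Gaussian integer of norm `n`. Moreover `c ∈ (x + Γ) ∩ f (x + Γ)` gives
`n * (f x - x) ∈ Γ`, and the real part of this is `(U.re - n) * a ∓ U.im * b`, an integer.
Rational independence forces `U.re = n`, hence `U = n` and `u = 1`. So `f` is `id` or `conj`, and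
`conj` is excluded because `conj x - x = -2 * b * I` with `b` irrational.
-/

lemma mem_Zi_iff {z : ℂ} : z ∈ Zi ↔ ∃ m k : ℤ, z = m + k * I := by
  constructor
  · rintro ⟨g, rfl⟩
    exact ⟨g.re, g.im, by simpa using GaussianInt.toComplex_def g⟩
  · rintro ⟨m, k, rfl⟩
    exact ⟨⟨m, k⟩, by simp [GaussianInt.toComplex_def']⟩

lemma natCast_mem_Zi (n : ℕ) : (n : ℂ) ∈ Zi := ⟨n, map_natCast GaussianInt.toComplex n⟩

lemma mul_mem_Zi {z w : ℂ} (hz : z ∈ Zi) (hw : w ∈ Zi) : z * w ∈ Zi := by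
  obtain ⟨g, rfl⟩ := hz
  obtain ⟨h, rfl⟩ := hw
  exact ⟨g * h, map_mul GaussianInt.toComplex g h⟩

lemma conj_mem_Zi {z : ℂ} (hz : z ∈ Zi) : conj z ∈ Zi := by
  obtain ⟨m, k, rfl⟩ := mem_Zi_iff.1 hz
  exact mem_Zi_iff.2 ⟨m, -k, by simp⟩

lemma exists_re_eq_intCast_of_mem_Zi {z : ℂ} (hz : z ∈ Zi) : ∃ j : ℤ, z.re = j := by
  obtain ⟨m, k, rfl⟩ := mem_Zi_iff.1 hz
  exact ⟨m, by simp⟩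

lemma mem_shiftedZi_iff {x z : ℂ} : z ∈ shiftedZi x ↔ ∃ g ∈ Zi, z = x + g := by
  simp only [shiftedZi, Set.mem_vadd_set, vadd_eq_add, eq_comm, SetLike.mem_coe]

lemma self_mem_shiftedZi (x : ℂ) : x ∈ shiftedZi x :=
  mem_shiftedZi_iff.2 ⟨0, Zi.zero_mem, (add_zero x).symm⟩

lemma id_mem_OCs (x : ℂ) : id ∈ OCs x :=
  ⟨⟨LinearIsometryEquiv.refl ℝ ℂ, rfl⟩, x, self_mem_shiftedZi x, Zi, le_rfl,
    by simp [AddSubgroup.relIndex_self], by rw [Set.image_id, Set.inter_self]; rfl⟩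

lemma isRotation_or_isReflection {f : ℂ → ℂ} (hf : IsLinIso f) :
    IsRotation f ∨ IsReflection f := by
  obtain ⟨R, rfl⟩ := hf
  obtain ⟨u, rfl | rfl⟩ := linear_isometry_complex R
  · exact .inl ⟨u, Circle.norm_coe u, fun w => rotation_apply u w⟩
  · exact .inr ⟨u, Circle.norm_coe u, fun w => by simp [rotation_apply]⟩

lemma exists_mem_image_add_natCast_of_mem_OCs {x : ℂ} {f : ℂ → ℂ} (hf : f ∈ OCs x) :
    ∃ c ∈ shiftedZi x, ∃ n : ℕ, n ≠ 0 ∧ c ∈ f '' shiftedZi x ∧ c + n ∈ f '' shiftedZi x := by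
  obtain ⟨-, c, hc, Λ, -, hidx, hset⟩ := hf
  have hmem : ∀ t ∈ Λ, c + t ∈ f '' shiftedZi x := fun t ht =>
    (hset.symm ▸ Set.vadd_mem_vadd_set ht : c + t ∈ shiftedZi x ∩ f '' shiftedZi x).2
  refine ⟨c, hc, Λ.relIndex Zi, hidx, by simpa using hmem 0 Λ.zero_mem, ?_⟩
  simpa using hmem _ (Λ.nsmul_relIndex_mem (g := (1 : ℂ)) (by simpa using natCast_mem_Zi 1))

lemma exists_apply_eq_natCast_of_mem_OCs {x : ℂ} {f : ℂ → ℂ} (hf : f ∈ OCs x) :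
    ∃ n : ℕ, n ≠ 0 ∧ ∃ δ ∈ Zi, f δ = n := by
  obtain ⟨R, rfl⟩ := hf.1
  obtain ⟨c, -, n, hn, ⟨z, hz, hRz⟩, ⟨z', hz', hRz'⟩⟩ := exists_mem_image_add_natCast_of_mem_OCs hf
  obtain ⟨g, hg, rfl⟩ := mem_shiftedZi_iff.1 hz
  obtain ⟨g', hg', rfl⟩ := mem_shiftedZi_iff.1 hz'
  refine ⟨n, hn, g' - g, sub_mem hg' hg, ?_⟩
  rw [show g' - g = (x + g') - (x + g) by ring, map_sub, hRz, hRz', add_sub_cancel_left]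

lemma exists_apply_add_eq_of_mem_OCs {x : ℂ} {f : ℂ → ℂ} (hf : f ∈ OCs x) :
    ∃ g₁ ∈ Zi, ∃ g₂ ∈ Zi, f (x + g₂) = x + g₁ := by
  obtain ⟨c, hc, -, -, ⟨z, hz, hfz⟩, -⟩ := exists_mem_image_add_natCast_of_mem_OCs hf
  obtain ⟨g₁, hg₁, rfl⟩ := mem_shiftedZi_iff.1 hc
  obtain ⟨g₂, hg₂, rfl⟩ := mem_shiftedZi_iff.1 hz
  exact ⟨g₁, hg₁, g₂, hg₂, hfz⟩

lemma ofReal_mul_eq_conj_of_mul_eq_ofReal {u z : ℂ} {r : ℝ} (hu : ‖u‖ = 1) (h : u * z = r) :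
    r * u = conj z := by
  have hu' : conj u * u = 1 := by rw [mul_comm, mul_conj, normSq_eq_norm_sq, hu]; simp
  calc (r : ℂ) * u = conj (u * z) * u := by rw [h, conj_ofReal]
    _ = conj z * (conj u * u) := by rw [map_mul]; ring
    _ = conj z := by rw [hu', mul_one]

lemma eq_natCast_of_re_sub_mul_eq_intCast {a b : ℝ} (hind : ¬∃ r s : ℚ, a = r + s * b)
    {U : ℂ} {n : ℕ} (hU : U ∈ Zi) (hUn : ‖U‖ = n) {j : ℤ}
    (hj : ((U - n) * (a + b * I)).re = j) : U = n := by
  obtain ⟨m, k, rfl⟩ := mem_Zi_iff.1 hU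
  replace hj : ((m : ℝ) - n) * a - k * b = j := by simpa using hj
  have hmn : m = n := by
    by_contra hmn
    have hmn' : (m : ℝ) - n ≠ 0 := sub_ne_zero.2 (by exact_mod_cast hmn)
    refine hind ⟨j / (m - n), k / (m - n), ?_⟩
    push_cast
    field_simp
    linarith
  have hk : k = 0 := by
    have hsq : (m : ℝ) ^ 2 + k ^ 2 = n ^ 2 := by
      rw [← hUn, Complex.sq_norm]
      exact_mod_cast (normSq_add_mul_I m k).symm
    rw [hmn] at hsq
    exact_mod_cast pow_eq_zero_iff (n := 2) two_ne_zero |>.1 (by simpa using hsq)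
  simp [hmn, hk]

lemma eq_one_of_mul_add_eq {a b : ℝ} (hind : ¬∃ r s : ℚ, a = r + s * b) {u : ℂ} (hu : ‖u‖ = 1)
    {n : ℕ} (hn : n ≠ 0) {δ g₁ g₂ : ℂ} (hδ : δ ∈ Zi) (hg₁ : g₁ ∈ Zi) (hg₂ : g₂ ∈ Zi)
    (hδn : u * δ = n) (h : u * (a + b * I + g₂) = a + b * I + g₁) : u = 1 := by
  have hU : (n : ℂ) * u ∈ Zi := by
    rw [← ofReal_natCast, ofReal_mul_eq_conj_of_mul_eq_ofReal hu (by simpa using hδn)]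
    exact conj_mem_Zi hδ
  have hUx : (n * u - n) * (a + b * I) = n * g₁ - n * u * g₂ := by linear_combination n * h
  obtain ⟨j, hj⟩ := exists_re_eq_intCast_of_mem_Zi
    (sub_mem (mul_mem_Zi (natCast_mem_Zi n) hg₁) (mul_mem_Zi hU hg₂))
  have := eq_natCast_of_re_sub_mul_eq_intCast hind hU (by simp [hu]) (hUx ▸ hj)
  simpa [hn] using this

lemma eq_one_of_mul_conj_add_eq {a b : ℝ} (hind : ¬∃ r s : ℚ, a = r + s * b) {u : ℂ}
    (hu : ‖u‖ = 1) {n : ℕ} (hn : n ≠ 0) {δ g₁ g₂ : ℂ} (hδ : δ ∈ Zi) (hg₁ : g₁ ∈ Zi) (hg₂ : g₂ ∈ Zi)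
    (hδn : u * conj δ = n)
    (h : u * conj (a + b * I + g₂) = a + b * I + g₁) : u = 1 := by
  have hU : (n : ℂ) * u = δ := by
    rw [← ofReal_natCast, ofReal_mul_eq_conj_of_mul_eq_ofReal hu (by simpa using hδn), conj_conj]
  have hUx : ((conj δ - n) * (a + b * I)).re = (n * g₁ - δ * conj g₂).re := by
    rw [map_add] at h
    calc ((conj δ - n) * (a + b * I)).re
        = (conj (δ * conj (a + b * I)) - n * (a + b * I)).re := by
          rw [map_mul, conj_conj, sub_mul, mul_comm (conj δ)]
      _ = (δ * conj (a + b * I) - n * (a + b * I)).re := by rw [sub_re, sub_re, conj_re]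
      _ = (n * g₁ - δ * conj g₂).re := by rw [← hU]; congr 1; linear_combination n * h
  obtain ⟨j, hj⟩ := exists_re_eq_intCast_of_mem_Zi
    (sub_mem (mul_mem_Zi (natCast_mem_Zi n) hg₁) (mul_mem_Zi hδ (conj_mem_Zi hg₂)))
  have := eq_natCast_of_re_sub_mul_eq_intCast hind (conj_mem_Zi hδ) (by simp [← hU, hu]) (hUx ▸ hj)
  rw [← hU] at this
  simpa [hn] using congrArg conj this

lemma conj_add_ne_add {a b : ℝ} (hb : Irrational b) {g₁ g₂ : ℂ} (hg₁ : g₁ ∈ Zi) (hg₂ : g₂ ∈ Zi) :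
    conj (a + b * I + g₂) ≠ a + b * I + g₁ := by
  intro h
  obtain ⟨m₁, k₁, rfl⟩ := mem_Zi_iff.1 hg₁
  obtain ⟨m₂, k₂, rfl⟩ := mem_Zi_iff.1 hg₂
  have him : -b + -k₂ = b + k₁ := by simpa using congrArg im h
  exact hb ⟨-(k₁ + k₂) / 2, by push_cast; linarith⟩

theorem OC_of_rationally_independent_general (a b : ℝ) (hb : Irrational b)
    (hind : ¬∃ r s : ℚ, a = (r : ℝ) + (s : ℝ) * b) :
    OCs (a + b * I) = ({id} : Set (ℂ → ℂ)) := by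
  refine Set.eq_singleton_iff_unique_mem.2 ⟨id_mem_OCs _, fun f hf => ?_⟩
  obtain ⟨n, hn, δ, hδ, hfδ⟩ := exists_apply_eq_natCast_of_mem_OCs hf
  obtain ⟨g₁, hg₁, g₂, hg₂, hfx⟩ := exists_apply_add_eq_of_mem_OCs hf
  rcases isRotation_or_isReflection hf.1 with ⟨u, hu, hfu⟩ | ⟨u, hu, hfu⟩
  · rw [hfu] at hfδ hfx
    obtain rfl := eq_one_of_mul_add_eq hind hu hn hδ hg₁ hg₂ hfδ hfx
    funext w
    simp [hfu]
  · rw [hfu] at hfδ hfx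
    obtain rfl := eq_one_of_mul_conj_add_eq hind hu hn hδ hg₁ hg₂ hfδ hfx
    rw [one_mul] at hfx
    exact absurd hfx (conj_add_ne_add hb hg₁ hg₂)

theorem OC_of_rationally_independent (a b : ℝ) (ha : Irrational a) (hb : Irrational b)
    (hind : ¬∃ r s : ℚ, a = (r : ℝ) + (s : ℝ) * b) :
    OCs (a + b * I) = ({id} : Set (ℂ → ℂ)) :=
  OC_of_rationally_independent_general a b hb hind
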